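/- arXiv:1011.4381 — 3 statements merged into one kernel-verified Lean document; each statement's English description precedes it below -/
import Mathlib

section
/- Fix a density π on ℝ^d with π > 0 on its support. Define, for nonsingular S, the mean field h_π(S) := S·(∫∫ (min{1, π(x+Su)/π(x)} - α*)·(uuᵀ/‖u‖²)·q(u)du·π(x)dx)·Sᵀ. Let A ∈ ℝ^{d×d} be non-singular, b ∈ ℝ^d, and define π̂(x) := |det A|⁻¹·π(A⁻¹x - b). Then A·h_π(S)·Aᵀ = h_{π̂}(AS) for all non-singular S ∈ ℝ^{d×d}. -/
open Matrix MeasureTheory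

/-- The mean field `h_π(S)` of the RAM algorithm, written entrywise. -/
noncomputable def meanField {d : ℕ} (pi q : (Fin d → ℝ) → ℝ) (αstar : ℝ)
    (S : Matrix (Fin d) (Fin d) ℝ) : Matrix (Fin d) (Fin d) ℝ :=
  S * (Matrix.of fun i j =>
    ∫ x : Fin d → ℝ, (∫ u : Fin d → ℝ,
      (min 1 (pi (x + S.mulVec u) / pi x) - αstar) * (u i * u j / ∑ k, u k ^ 2) * q u)
      * pi x) * Sᵀ

/-- Change of variables for an affine map, without any measurability assumption on `g`. -/
lemma integral_comp_affine {d : ℕ} (A : Matrix (Fin d) (Fin d) ℝ) (hA : IsUnit A.det)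
    (b : Fin d → ℝ) (g : (Fin d → ℝ) → ℝ) :
    ∫ y, g (A⁻¹.mulVec y - b) = |A.det| * ∫ y, g y := by
  have hdet : A.det ≠ 0 := by
    intro h; rw [h] at hA; exact (by simpa using hA : IsUnit (0:ℝ)).ne_zero rfl
  have hinv : Invertible A := A.invertibleOfIsUnitDet hA
  let ℓ : (Fin d → ℝ) ≃ₗ[ℝ] (Fin d → ℝ) := A.toLinearEquiv' hinv
  let e : (Fin d → ℝ) ≃ₜ (Fin d → ℝ) :=
    (Homeomorph.addRight b).trans ℓ.toContinuousLinearEquiv.toHomeomorph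
  have he : ∀ x, e x = A.mulVec (x + b) := fun x => rfl
  have hmap : Measure.map e.toMeasurableEquiv volume
      = ENNReal.ofReal |A.det|⁻¹ • volume := by
    have h1 : (e.toMeasurableEquiv : (Fin d → ℝ) → (Fin d → ℝ))
        = (Matrix.toLin' A) ∘ (fun x => x + b) := by
      funext x; simp [he, Matrix.toLin'_apply]
    rw [h1, ← Measure.map_map]
    · rw [map_add_right_eq_self, Real.map_matrix_volume_pi_eq_smul_volume_pi hdet, abs_inv]
    · exact (Matrix.toLin' A).continuous_of_finiteDimensional.measurable
    · exact measurable_add_const b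
  have key : ∫ y, g (A⁻¹.mulVec y - b) ∂(Measure.map e.toMeasurableEquiv volume)
      = ∫ x, g x := by
    rw [MeasureTheory.integral_map_equiv]
    congr 1; funext x
    have : A⁻¹.mulVec (e.toMeasurableEquiv x) - b = x := by
      show A⁻¹.mulVec (A.mulVec (x + b)) - b = x
      rw [Matrix.mulVec_mulVec, Matrix.nonsing_inv_mul A hA, Matrix.one_mulVec]
      abel
    rw [this]
  rw [hmap, integral_smul_measure] at key
  rw [ENNReal.toReal_ofReal (by positivity)] at key
  have habs : |A.det| ≠ 0 := abs_ne_zero.mpr hdet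
  field_simp at key ⊢
  rw [← key, smul_eq_mul, ← mul_assoc, mul_one_div_cancel habs, one_mul]

theorem meanField_affine_invariance {d : ℕ}
    (pi q : (Fin d → ℝ) → ℝ) (αstar : ℝ) (hαstar : αstar ∈ Set.Ioo (0 : ℝ) 1)
    (hpi_nonneg : ∀ x, 0 ≤ pi x) (hpi_int : ∫ x, pi x = 1)
    (hq_nonneg : ∀ u, 0 ≤ q u) (hq_int : ∫ u, q u = 1)
    (hq_symm : ∃ qhat : ℝ → ℝ, ∀ u, q u = qhat (Real.sqrt (∑ i, u i ^ 2)))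
    (A : Matrix (Fin d) (Fin d) ℝ) (hA : IsUnit A.det) (b : Fin d → ℝ)
    (pihat : (Fin d → ℝ) → ℝ)
    (hpihat : ∀ x, pihat x = |A.det|⁻¹ * pi (A⁻¹.mulVec x - b)) :
    ∀ S : Matrix (Fin d) (Fin d) ℝ, IsUnit S.det →
      A * meanField pi q αstar S * Aᵀ = meanField pihat q αstar (A * S) := by
  intro S hS
  have hdet : A.det ≠ 0 := by
    intro h; rw [h] at hA; exact (by simpa using hA : IsUnit (0:ℝ)).ne_zero rfl
  have habs : (0:ℝ) < |A.det|⁻¹ := by positivity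
  have hmid : (Matrix.of fun i j =>
      ∫ x : Fin d → ℝ, (∫ u : Fin d → ℝ,
        (min 1 (pihat (x + (A * S).mulVec u) / pihat x) - αstar)
          * (u i * u j / ∑ k, u k ^ 2) * q u) * pihat x)
      = (Matrix.of fun i j =>
      ∫ x : Fin d → ℝ, (∫ u : Fin d → ℝ,
        (min 1 (pi (x + S.mulVec u) / pi x) - αstar)
          * (u i * u j / ∑ k, u k ^ 2) * q u) * pi x) := by
    ext i j
    simp only [Matrix.of_apply]
    have hx : ∀ x : Fin d → ℝ,
        (∫ u : Fin d → ℝ, (min 1 (pihat (x + (A * S).mulVec u) / pihat x) - αstar)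
          * (u i * u j / ∑ k, u k ^ 2) * q u) * pihat x
        = |A.det|⁻¹ * ((∫ u : Fin d → ℝ,
            (min 1 (pi ((A⁻¹.mulVec x - b) + S.mulVec u) / pi (A⁻¹.mulVec x - b)) - αstar)
              * (u i * u j / ∑ k, u k ^ 2) * q u) * pi (A⁻¹.mulVec x - b)) := by
      intro x
      have hratio : ∀ u : Fin d → ℝ,
          pihat (x + (A * S).mulVec u) / pihat x
            = pi ((A⁻¹.mulVec x - b) + S.mulVec u) / pi (A⁻¹.mulVec x - b) := by
        intro u
        have harg : A⁻¹.mulVec (x + (A * S).mulVec u) - b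
            = (A⁻¹.mulVec x - b) + S.mulVec u := by
          rw [Matrix.mulVec_add, Matrix.mulVec_mulVec, ← Matrix.mul_assoc,
            Matrix.nonsing_inv_mul A hA, Matrix.one_mul]
          abel
        rw [hpihat, hpihat, harg, mul_div_mul_left _ _ (ne_of_gt habs)]
      simp only [hratio]
      rw [hpihat x]; ring
    simp only [hx]
    rw [MeasureTheory.integral_const_mul]
    rw [integral_comp_affine A hA b (fun y => (∫ u : Fin d → ℝ,
        (min 1 (pi (y + S.mulVec u) / pi y) - αstar)
          * (u i * u j / ∑ k, u k ^ 2) * q u) * pi y)]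
    rw [← mul_assoc, inv_mul_cancel₀ (abs_ne_zero.mpr hdet), one_mul]
  unfold meanField
  rw [hmid, Matrix.transpose_mul]
  noncomm_ring
end

section
/- Let π be a continuous probability density on ℝ^d, q a probability density on (0,∞), and v ∈ ℝ^d a unit vector. Then g(θ) := ∫₀^∞ ∫_{ℝ^d} min{π(x), π(x + rθv)} dx q(r) dr is continuous on (0,∞), lim_{θ→∞} g(θ) = 0, and lim_{θ→0+} g(θ) = 1. -/
open MeasureTheory Filter Topology

section Aux

variable {d : ℕ}

lemma minInt (π : EuclideanSpace ℝ (Fin d) → ℝ) (v : EuclideanSpace ℝ (Fin d))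
    (hπ_cont : Continuous π) (hπ_nonneg : ∀ x, 0 ≤ π x) (hπ_int : Integrable π) (s : ℝ) :
    Integrable (fun x => min (π x) (π (x + s • v))) := by
  refine hπ_int.mono'
    ((hπ_cont.min (hπ_cont.comp (continuous_id.add continuous_const))).aestronglyMeasurable) ?_
  filter_upwards with x
  rw [Real.norm_eq_abs, abs_of_nonneg (le_min (hπ_nonneg x) (hπ_nonneg _))]
  exact min_le_left _ _

lemma tail_small (π : EuclideanSpace ℝ (Fin d) → ℝ)
    (hπ_cont : Continuous π) (hπ_nonneg : ∀ x, 0 ≤ π x) (hπ_int : Integrable π)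
    {ε : ℝ} (hε : 0 < ε) :
    ∃ N : ℝ, 0 < N ∧ ∫ x in {x : EuclideanSpace ℝ (Fin d) | N < ‖x‖}, π x < ε := by
  have hmeasA : ∀ c : ℝ, MeasurableSet {x : EuclideanSpace ℝ (Fin d) | c < ‖x‖} := fun c =>
    (isOpen_lt continuous_const continuous_norm).measurableSet
  have h : Tendsto (fun n : ℕ => ∫ x, Set.indicator {x : EuclideanSpace ℝ (Fin d) | (n:ℝ) < ‖x‖} π x)
      atTop (𝓝 (∫ x : EuclideanSpace ℝ (Fin d), (0:ℝ))) := by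
    apply tendsto_integral_of_dominated_convergence π
    · intro n
      exact (hπ_cont.aestronglyMeasurable).indicator (hmeasA n)
    · exact hπ_int
    · intro n
      filter_upwards with x
      rw [Real.norm_eq_abs, abs_of_nonneg (Set.indicator_nonneg (fun y _ => hπ_nonneg y) x)]
      exact Set.indicator_le_self' (fun y _ => hπ_nonneg y) x
    · filter_upwards with x
      have : ∀ᶠ n : ℕ in atTop,
          Set.indicator {x : EuclideanSpace ℝ (Fin d) | (n:ℝ) < ‖x‖} π x = 0 := by
        filter_upwards [eventually_ge_atTop (Nat.ceil ‖x‖)] with n hn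
        apply Set.indicator_of_notMem
        simp only [Set.mem_setOf_eq, not_lt]
        exact le_trans (Nat.le_ceil _) (by exact_mod_cast hn)
      exact Tendsto.congr' (this.mono fun n h => h.symm) tendsto_const_nhds
  simp only [integral_zero] at h
  obtain ⟨n, hn, hn1⟩ := ((h.eventually (gt_mem_nhds hε)).and (eventually_ge_atTop 1)).exists
  refine ⟨(n:ℝ), by exact_mod_cast hn1, ?_⟩
  rwa [integral_indicator (hmeasA _)] at hn

lemma G_tendsto_zero (π : EuclideanSpace ℝ (Fin d) → ℝ) (v : EuclideanSpace ℝ (Fin d))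
    (hπ_cont : Continuous π) (hπ_nonneg : ∀ x, 0 ≤ π x) (hπ_int : Integrable π)
    (hv : ‖v‖ = 1) :
    Tendsto (fun s : ℝ => ∫ x, min (π x) (π (x + s • v))) atTop (𝓝 0) := by
  rw [Metric.tendsto_atTop]
  intro ε hε
  obtain ⟨N, hN, hNε⟩ := tail_small π hπ_cont hπ_nonneg hπ_int (half_pos hε)
  set A : Set (EuclideanSpace ℝ (Fin d)) := {x | N < ‖x‖} with hA
  have hmeasA : MeasurableSet A := (isOpen_lt continuous_const continuous_norm).measurableSet
  refine ⟨2 * N + 1, fun s hs => ?_⟩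
  have hGnn : 0 ≤ ∫ x, min (π x) (π (x + s • v)) :=
    integral_nonneg fun x => le_min (hπ_nonneg x) (hπ_nonneg _)
  rw [Real.dist_eq, sub_zero, abs_of_nonneg hGnn]
  have i1 : Integrable (A.indicator π) := hπ_int.indicator hmeasA
  have i2 : Integrable (fun x => A.indicator π (x + s • v)) := i1.comp_add_right (s • v)
  have hpt : ∀ x, min (π x) (π (x + s • v)) ≤ A.indicator π x + A.indicator π (x + s • v) := by
    intro x
    by_cases hx : x ∈ A
    · rw [Set.indicator_of_mem hx]
      have := Set.indicator_nonneg (s := A) (fun y _ => hπ_nonneg y) (x + s • v)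
      have := min_le_left (π x) (π (x + s • v))
      linarith
    · have hx' : ‖x‖ ≤ N := not_lt.mp hx
      have hx2 : x + s • v ∈ A := by
        have h1 : ‖s • v‖ = s := by
          rw [norm_smul, hv, mul_one, Real.norm_eq_abs, abs_of_nonneg (by linarith)]
        have h2 := norm_sub_le (x + s • v) x
        rw [add_sub_cancel_left, h1] at h2
        simp only [hA, Set.mem_setOf_eq]
        linarith
      rw [Set.indicator_of_mem hx2]
      have := Set.indicator_nonneg (s := A) (fun y _ => hπ_nonneg y) x
      have := min_le_right (π x) (π (x + s • v))
      linarith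
  have hle : (∫ x, min (π x) (π (x + s • v))) ≤
      (∫ x, A.indicator π x) + ∫ x, A.indicator π (x + s • v) := by
    rw [← integral_add i1 i2]
    exact integral_mono (minInt π v hπ_cont hπ_nonneg hπ_int s) (i1.add i2) hpt
  have htrans : (∫ x, A.indicator π (x + s • v)) = ∫ x, A.indicator π x :=
    integral_add_right_eq_self (A.indicator π) (s • v)
  have hind : (∫ x, A.indicator π x) < ε / 2 := by
    rwa [integral_indicator hmeasA]
  calc (∫ x, min (π x) (π (x + s • v)))
      ≤ (∫ x, A.indicator π x) + ∫ x, A.indicator π (x + s • v) := hle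
    _ < ε := by rw [htrans]; linarith

end Aux

/-- The directional mean acceptance probability functional. -/
noncomputable def dirAccept {d : ℕ} (ρ : EuclideanSpace ℝ (Fin d) → ℝ) (q : ℝ → ℝ)
    (v : EuclideanSpace ℝ (Fin d)) (θ : ℝ) : ℝ :=
  ∫ r in Set.Ioi (0 : ℝ), (∫ x, min (ρ x) (ρ (x + (r * θ) • v))) * q r

theorem dirAccept_continuous_and_limits {d : ℕ}
    (π : EuclideanSpace ℝ (Fin d) → ℝ) (q : ℝ → ℝ)
    (hπ_cont : Continuous π) (hπ_nonneg : ∀ x, 0 ≤ π x)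
    (hπ_int : Integrable π) (hπ_one : ∫ x, π x = 1)
    (hq_nonneg : ∀ r ∈ Set.Ioi (0 : ℝ), 0 ≤ q r)
    (hq_int : ∫ r in Set.Ioi (0 : ℝ), q r = 1)
    (v : EuclideanSpace ℝ (Fin d)) (hv : ‖v‖ = 1) :
    ContinuousOn (dirAccept π q v) (Set.Ioi 0) ∧
      Tendsto (dirAccept π q v) atTop (nhds 0) ∧
      Tendsto (dirAccept π q v) (nhdsWithin 0 (Set.Ioi 0)) (nhds 1) := by
  have hq_i : IntegrableOn q (Set.Ioi 0) := by
    by_contra h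
    rw [MeasureTheory.integral_undef h] at hq_int
    norm_num at hq_int
  set G : ℝ → ℝ := fun s => ∫ x, min (π x) (π (x + s • v)) with hGdef
  have hGeq : dirAccept π q v = fun θ => ∫ r in Set.Ioi (0:ℝ), G (r * θ) * q r := rfl
  have hG0 : G 0 = 1 := by
    simp only [hGdef, zero_smul, add_zero, min_self]
    exact hπ_one
  have hGcont : Continuous G := by
    apply continuous_of_dominated
      (F := fun s x => min (π x) (π (x + s • v))) (bound := π)
    · intro s
      exact (minInt π v hπ_cont hπ_nonneg hπ_int s).aestronglyMeasurable
    · intro s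
      filter_upwards with x
      rw [Real.norm_eq_abs, abs_of_nonneg (le_min (hπ_nonneg x) (hπ_nonneg _))]
      exact min_le_left _ _
    · exact hπ_int
    · filter_upwards with x
      exact continuous_const.min
        (hπ_cont.comp (continuous_const.add (continuous_id.smul continuous_const)))
  have hGnn : ∀ s, 0 ≤ G s := fun s =>
    integral_nonneg fun x => le_min (hπ_nonneg x) (hπ_nonneg _)
  have hGle : ∀ s, G s ≤ 1 := by
    intro s
    rw [← hπ_one]
    exact integral_mono (minInt π v hπ_cont hπ_nonneg hπ_int s) hπ_int
      (fun x => min_le_left _ _)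
  have hGinf : Tendsto G atTop (𝓝 0) := G_tendsto_zero π v hπ_cont hπ_nonneg hπ_int hv
  have hmeas : ∀ θ : ℝ, AEStronglyMeasurable (fun r => G (r * θ) * q r)
      (volume.restrict (Set.Ioi 0)) := fun θ =>
    ((hGcont.comp (continuous_id.mul continuous_const)).aestronglyMeasurable).mul
      hq_i.aestronglyMeasurable
  have hbound : ∀ θ : ℝ, ∀ᵐ r ∂(volume.restrict (Set.Ioi (0:ℝ))),
      ‖G (r * θ) * q r‖ ≤ |q r| := by
    intro θ
    filter_upwards with r
    rw [norm_mul, Real.norm_eq_abs, Real.norm_eq_abs, abs_of_nonneg (hGnn _)]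
    exact mul_le_of_le_one_left (abs_nonneg _) (hGle _)
  refine ⟨?_, ?_, ?_⟩
  · rw [hGeq]
    refine Continuous.continuousOn ?_
    apply continuous_of_dominated hmeas hbound hq_i.abs
    filter_upwards with r
    exact (hGcont.comp (continuous_const.mul continuous_id)).mul continuous_const
  · rw [hGeq]
    have : Tendsto (fun θ => ∫ r in Set.Ioi (0:ℝ), G (r * θ) * q r) atTop
        (𝓝 (∫ r in Set.Ioi (0:ℝ), (0:ℝ))) := by
      apply tendsto_integral_filter_of_dominated_convergence (fun r => |q r|)
      · exact Eventually.of_forall hmeas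
      · exact Eventually.of_forall hbound
      · exact hq_i.abs
      · filter_upwards [ae_restrict_mem measurableSet_Ioi] with r hr
        have h1 : Tendsto (fun θ : ℝ => r * θ) atTop atTop :=
          Tendsto.const_mul_atTop hr tendsto_id
        simpa using (hGinf.comp h1).mul_const (q r)
    simpa using this
  · rw [hGeq]
    have : Tendsto (fun θ => ∫ r in Set.Ioi (0:ℝ), G (r * θ) * q r)
        (𝓝[>] (0:ℝ)) (𝓝 (∫ r in Set.Ioi (0:ℝ), q r)) := by
      apply tendsto_integral_filter_of_dominated_convergence (fun r => |q r|)
      · exact Eventually.of_forall hmeas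
      · exact Eventually.of_forall hbound
      · exact hq_i.abs
      · filter_upwards [ae_restrict_mem measurableSet_Ioi] with r hr
        have h1 : Tendsto (fun θ : ℝ => r * θ) (𝓝[>] (0:ℝ)) (𝓝 0) := by
          have : Tendsto (fun θ : ℝ => r * θ) (𝓝 (0:ℝ)) (𝓝 (r * 0)) :=
            (continuous_const.mul continuous_id).tendsto 0
          simpa using this.mono_left nhdsWithin_le_nhds
        have h2 : Tendsto (fun θ : ℝ => G (r * θ)) (𝓝[>] (0:ℝ)) (𝓝 1) := by
          have := (hGcont.tendsto 0).comp h1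
          rwa [hG0] at this
        simpa using h2.mul_const (q r)
    rwa [hq_int] at this
end

section
/- Let μ be the uniform probability measure on the unit sphere S^{d-1}, let s₁,...,s_d > 0, θ* > 0, and let ḡ: (0,∞) → ℝ satisfy: ḡ(t) ≥ 0 for t ≤ θ*, ḡ(t) ≤ 0 for t ≥ θ*, and ḡ(t) ≠ 0 for t ≠ θ* in a neighborhood of θ*. If ∫_{S^{d-1}} ḡ((Σᵢ sᵢ²vᵢ²)^{1/2})·(θ*² - Σᵢ sᵢ²vᵢ²) μ(dv) = 0 and ḡ is continuous, then the integrand is μ-a.e. zero; and if additionally ḡ(t)·(θ*² - t²) > 0 for all t ≠ θ*, then s₁ = s₂ = ... = s_d = θ*. -/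
open MeasureTheory

theorem elliptic_uniqueness_integrand {d : ℕ} (hd : 0 < d)
    (μ : Measure (Metric.sphere (0 : EuclideanSpace ℝ (Fin d)) 1))
    [IsProbabilityMeasure μ] [μ.IsOpenPosMeasure]
    (s : Fin d → ℝ) (hs : ∀ i, 0 < s i) (θstar : ℝ) (hθstar : 0 < θstar)
    (gbar : ℝ → ℝ) (hg_cont : Continuous gbar)
    (hg_nonneg : ∀ t, t ≤ θstar → 0 ≤ gbar t)
    (hg_nonpos : ∀ t, θstar ≤ t → gbar t ≤ 0)
    (hg_nbhd : ∀ᶠ t in nhds θstar, t ≠ θstar → gbar t ≠ 0)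
    (F : Metric.sphere (0 : EuclideanSpace ℝ (Fin d)) 1 → ℝ)
    (hF : ∀ v, F v = gbar (Real.sqrt (∑ i, s i ^ 2 * (v.1 i) ^ 2)) *
        (θstar ^ 2 - ∑ i, s i ^ 2 * (v.1 i) ^ 2))
    (hint : ∫ v, F v ∂μ = 0) :
    (∀ᵐ v ∂μ, F v = 0) ∧
    ((∀ t : ℝ, 0 < t → t ≠ θstar → 0 < gbar t * (θstar ^ 2 - t ^ 2)) →
      ∀ i, s i = θstar) := by
  have hFeq : F = fun v => gbar (Real.sqrt (∑ i, s i ^ 2 * (v.1 i) ^ 2)) *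
      (θstar ^ 2 - ∑ i, s i ^ 2 * (v.1 i) ^ 2) := funext hF
  have hFcont : Continuous F := by
    rw [hFeq]
    have hsum : Continuous fun v : Metric.sphere (0 : EuclideanSpace ℝ (Fin d)) 1 =>
        ∑ i, s i ^ 2 * (v.1 i) ^ 2 := by
      apply continuous_finset_sum
      intro i _
      exact continuous_const.mul
        ((((EuclideanSpace.proj i).continuous.comp continuous_subtype_val)).pow 2)
    exact (hg_cont.comp (Real.continuous_sqrt.comp hsum)).mul (continuous_const.sub hsum)
  have hFnonneg : ∀ v, 0 ≤ F v := by
    intro v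
    rw [hF]
    have hsum : 0 ≤ ∑ i, s i ^ 2 * (v.1 i) ^ 2 :=
      Finset.sum_nonneg fun i _ => by positivity
    set S := ∑ i, s i ^ 2 * (v.1 i) ^ 2 with hS
    have hsq : Real.sqrt S ^ 2 = S := Real.sq_sqrt hsum
    rcases le_total (Real.sqrt S) θstar with h | h
    · have h1 : 0 ≤ gbar (Real.sqrt S) := hg_nonneg _ h
      have h2 : S ≤ θstar ^ 2 := by
        rw [← hsq]; exact pow_le_pow_left₀ (Real.sqrt_nonneg _) h 2
      nlinarith
    · have h1 : gbar (Real.sqrt S) ≤ 0 := hg_nonpos _ h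
      have h2 : θstar ^ 2 ≤ S := by
        rw [← hsq]; exact pow_le_pow_left₀ hθstar.le h 2
      nlinarith
  haveI : CompactSpace (Metric.sphere (0 : EuclideanSpace ℝ (Fin d)) 1) :=
    isCompact_iff_compactSpace.mp (isCompact_sphere 0 1)
  have hInt : Integrable F μ :=
    hFcont.integrable_of_hasCompactSupport (HasCompactSupport.of_compactSpace F)
  have hae : F =ᵐ[μ] 0 :=
    (integral_eq_zero_iff_of_nonneg (fun v => hFnonneg v) hInt).mp hint
  have hzero : F = 0 := (hFcont.ae_eq_iff_eq μ continuous_const).mp hae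
  refine ⟨hae, fun hpos i => ?_⟩
  have hmem : EuclideanSpace.single i (1 : ℝ) ∈
      Metric.sphere (0 : EuclideanSpace ℝ (Fin d)) 1 := by
    simp [mem_sphere_zero_iff_norm, EuclideanSpace.norm_single]
  set e : Metric.sphere (0 : EuclideanSpace ℝ (Fin d)) 1 := ⟨_, hmem⟩
  have hsumE : ∑ j, s j ^ 2 * ((e.1 : EuclideanSpace ℝ (Fin d)) j) ^ 2 = s i ^ 2 := by
    simp [e, EuclideanSpace.single_apply]
  have hFe : F e = 0 := by rw [hzero]; rfl
  rw [hF, hsumE, Real.sqrt_sq (hs i).le] at hFe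
  by_contra hne
  have := hpos (s i) (hs i) hne
  rw [hFe] at this
  exact lt_irrefl 0 this
end
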